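/- Let (Γ, p, G, τ) be a G-framework in the plane: Γ = (V, E) a finite simple graph, p : V → ℝ², G a finite group acting on Γ by graph automorphisms, and τ : G → O(2) a homomorphism with p_{g·v} = τ(g) p_v for all g, v. Equip C₁ = ℝ^E with the edge permutation action and C₀ = (V → ℝ²) with the action (g·F)_{g·v} = τ(g) F_v, and let ∂ : C₁ → C₀ be the equilibrium map. Then ker ∂ and coker ∂ = C₀ / im ∂ carry induced G-actions, and the symmetric Maxwell rule holds: for every g ∈ G, trace(g on C₀) − trace(g on C₁) = trace(g on coker ∂) − trace(g on ker ∂). -/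

import Mathlib

/-!
Traces are additive along invariant subspaces: `trace f = trace (f on W) + trace (f on V ⧸ W)`.
Apply this to `ker ∂ ⊆ C₁` and to `im ∂ ⊆ C₀`; since `∂` induces an equivariant isomorphism
`C₁ ⧸ ker ∂ ≃ im ∂`, the two contributions of `im ∂` cancel. The only input from the framework
is that `∂` intertwines the two actions: `g` maps the neighbours of `v` onto those of `g • v`,
and `p (g • v) - p (g • u) = τ g (p v - p u)`.
-/

/-- The equilibrium map of a framework `(Γ, p)` in the plane:
`(∂ w) v = ∑_{u ~ v} w {u,v} • (p v − p u)`. -/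
noncomputable def equilibriumMap {Vt : Type} [Fintype Vt] [DecidableEq Vt]
    (Γ : SimpleGraph Vt) [DecidableRel Γ.Adj] (p : Vt → Fin 2 → ℝ) :
    (Γ.edgeSet → ℝ) →ₗ[ℝ] (Vt → Fin 2 → ℝ) where
  toFun w := fun v => ∑ u ∈ (Γ.neighborFinset v).attach,
    w ⟨s(v, u.1), Γ.mem_edgeSet.mpr ((Γ.mem_neighborFinset v u.1).mp u.2)⟩ • (p v - p u.1)
  map_add' w₁ w₂ := by
    funext v
    simp [add_smul, Finset.sum_add_distrib]
  map_smul' c w := by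
    funext v
    simp [mul_smul, Finset.smul_sum]

namespace LinearMap

section Intertwining

variable {R M N : Type*} [Semiring R] [AddCommMonoid M] [Module R M] [AddCommMonoid N] [Module R N]
  {D : M →ₗ[R] N} {A : Module.End R M} {B : Module.End R N}

theorem mapsTo_ker_of_comp_eq (h : D ∘ₗ A = B ∘ₗ D) : ∀ x ∈ ker D, A x ∈ ker D := by
  intro x hx
  rw [mem_ker] at hx ⊢
  rw [← comp_apply, h, comp_apply, hx, map_zero]

theorem range_le_comap_range_of_comp_eq (h : D ∘ₗ A = B ∘ₗ D) :
    range D ≤ (range D).comap B := by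
  rintro _ ⟨x, rfl⟩
  exact ⟨A x, by rw [← comp_apply, h, comp_apply]⟩

end Intertwining

section Field

variable {K V M N : Type*} [Field K]
  [AddCommGroup V] [Module K V] [AddCommGroup M] [Module K M] [AddCommGroup N] [Module K N]

theorem trace_eq_trace_restrict_add_trace_mapQ [FiniteDimensional K V] (f : Module.End K V)
    (W : Submodule K V) (hf : W ≤ W.comap f) :
    trace K V f = trace K W (f.restrict hf) + trace K (V ⧸ W) (W.mapQ W f hf) := by
  obtain ⟨U, hWU⟩ := W.exists_isCompl
  have hW : W.projectionOnto U hWU ∘ₗ f ∘ₗ W.subtype = f.restrict hf := by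
    ext x
    simp [Submodule.projectionOnto_apply_of_mem_left hWU (hf x.2)]
  have hU : U.projectionOnto W hWU.symm ∘ₗ f ∘ₗ U.subtype =
      (W.quotientEquivOfIsCompl U hWU).conj (W.mapQ W f hf) := by
    ext x
    simp [LinearEquiv.conj_apply]
  calc trace K V f
      = trace K V (f ∘ₗ (W.projection U hWU + U.projection W hWU.symm)) := by
        rw [Submodule.projection_add_projection_eq_id, comp_id]
    _ = trace K W (W.projectionOnto U hWU ∘ₗ f ∘ₗ W.subtype)
        + trace K U (U.projectionOnto W hWU.symm ∘ₗ f ∘ₗ U.subtype) := by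
        rw [comp_add, map_add, Submodule.projection, Submodule.projection, ← comp_assoc,
          ← comp_assoc, trace_comp_comm' (f ∘ₗ W.subtype), trace_comp_comm' (f ∘ₗ U.subtype)]
    _ = _ := by rw [hW, hU, trace_conj']

theorem quotKerEquivRange_conj_mapQ {D : M →ₗ[K] N} {A : Module.End K M} {B : Module.End K N}
    (h : D ∘ₗ A = B ∘ₗ D) (hA : ker D ≤ (ker D).comap A) (hB : ∀ y ∈ range D, B y ∈ range D) :
    D.quotKerEquivRange.conj ((ker D).mapQ (ker D) A hA) = B.restrict hB := by
  ext y
  obtain ⟨x, rfl⟩ := D.quotKerEquivRange.surjective y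
  obtain ⟨x, rfl⟩ := Submodule.Quotient.mk_surjective _ x
  have hx : D (A x) = B (D x) := congr($h x)
  simp [LinearEquiv.conj_apply, hx]

theorem trace_sub_trace_eq_trace_mapQ_range_sub_trace_restrict_ker
    [FiniteDimensional K M] [FiniteDimensional K N]
    {D : M →ₗ[K] N} {A : Module.End K M} {B : Module.End K N} (h : D ∘ₗ A = B ∘ₗ D)
    (hA : ∀ x ∈ ker D, A x ∈ ker D) (hB : range D ≤ (range D).comap B) :
    trace K N B - trace K M A =
      trace K (N ⧸ range D) ((range D).mapQ (range D) B hB) - trace K (ker D) (A.restrict hA) := by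
  rw [trace_eq_trace_restrict_add_trace_mapQ B (range D) hB,
    trace_eq_trace_restrict_add_trace_mapQ A (ker D) hA,
    ← quotKerEquivRange_conj_mapQ h hA hB, trace_conj']
  ring

end Field

end LinearMap

theorem equilibriumMap_comp_eq {Vt : Type} [Fintype Vt] [DecidableEq Vt]
    (Γ : SimpleGraph Vt) [DecidableRel Γ.Adj] (p : Vt → Fin 2 → ℝ) (σ : Γ ≃g Γ)
    (R : Matrix (Fin 2) (Fin 2) ℝ) (hp : ∀ v, p (σ v) = R.mulVec (p v))
    (T₁ : (Γ.edgeSet → ℝ) →ₗ[ℝ] (Γ.edgeSet → ℝ))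
    (hT₁ : ∀ (w : Γ.edgeSet → ℝ) (u v : Vt) (h : s(u, v) ∈ Γ.edgeSet)
      (h' : s(σ u, σ v) ∈ Γ.edgeSet), T₁ w ⟨s(σ u, σ v), h'⟩ = w ⟨s(u, v), h⟩)
    (T₀ : (Vt → Fin 2 → ℝ) →ₗ[ℝ] (Vt → Fin 2 → ℝ))
    (hT₀ : ∀ (F : Vt → Fin 2 → ℝ) (v : Vt), T₀ F (σ v) = R.mulVec (F v)) :
    equilibriumMap Γ p ∘ₗ T₁ = T₀ ∘ₗ equilibriumMap Γ p := by
  refine LinearMap.ext fun w => funext fun v' => ?_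
  obtain ⟨v, rfl⟩ := σ.surjective v'
  let e : Γ.neighborFinset v ≃ Γ.neighborFinset (σ v) :=
    σ.toEquiv.subtypeEquiv fun u => by simpa using σ.map_adj_iff.symm
  simp only [LinearMap.comp_apply, hT₀, equilibriumMap, LinearMap.coe_mk, AddHom.coe_mk,
    Matrix.mulVec_sum, ← Finset.univ_eq_attach]
  refine (Fintype.sum_equiv e _ _ fun u => ?_).symm
  simp only [e, Equiv.subtypeEquiv_apply, RelIso.coe_fn_toEquiv, hp, Matrix.mulVec_smul,
    Matrix.mulVec_sub]
  rw [hT₁]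

theorem stmt12_general {Vt G : Type} [Fintype Vt] [DecidableEq Vt] [Group G]
    (Γ : SimpleGraph Vt) [DecidableRel Γ.Adj] (p : Vt → Fin 2 → ℝ)
    [MulAction G Vt]
    (hadj : ∀ (g : G) (u v : Vt), Γ.Adj u v ↔ Γ.Adj (g • u) (g • v))
    (τ : G →* Matrix.orthogonalGroup (Fin 2) ℝ)
    (hp : ∀ (g : G) (v : Vt), p (g • v) = (τ g : Matrix (Fin 2) (Fin 2) ℝ).mulVec (p v))
    (T₁ : G → ((Γ.edgeSet → ℝ) →ₗ[ℝ] (Γ.edgeSet → ℝ)))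
    (hT₁ : ∀ (g : G) (w : Γ.edgeSet → ℝ) (u v : Vt) (h : s(u, v) ∈ Γ.edgeSet)
      (h' : s(g • u, g • v) ∈ Γ.edgeSet),
      T₁ g w ⟨s(g • u, g • v), h'⟩ = w ⟨s(u, v), h⟩)
    (T₀ : G → ((Vt → Fin 2 → ℝ) →ₗ[ℝ] (Vt → Fin 2 → ℝ)))
    (hT₀ : ∀ (g : G) (F : Vt → Fin 2 → ℝ) (v : Vt),
      T₀ g F (g • v) = (τ g : Matrix (Fin 2) (Fin 2) ℝ).mulVec (F v)) :
    ∃ (hker : ∀ g : G, ∀ x ∈ LinearMap.ker (equilibriumMap Γ p),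
        T₁ g x ∈ LinearMap.ker (equilibriumMap Γ p))
      (hrange : ∀ g : G, LinearMap.range (equilibriumMap Γ p) ≤
        (LinearMap.range (equilibriumMap Γ p)).comap (T₀ g)),
      ∀ g : G,
        LinearMap.trace ℝ (Vt → Fin 2 → ℝ) (T₀ g) -
            LinearMap.trace ℝ (Γ.edgeSet → ℝ) (T₁ g) =
          LinearMap.trace ℝ ((Vt → Fin 2 → ℝ) ⧸ LinearMap.range (equilibriumMap Γ p))
              (Submodule.mapQ (LinearMap.range (equilibriumMap Γ p))
                (LinearMap.range (equilibriumMap Γ p)) (T₀ g) (hrange g)) -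
            LinearMap.trace ℝ (LinearMap.ker (equilibriumMap Γ p))
              ((T₁ g).restrict (hker g)) := by
  have hcomm (g : G) : equilibriumMap Γ p ∘ₗ T₁ g = T₀ g ∘ₗ equilibriumMap Γ p :=
    equilibriumMap_comp_eq Γ p ⟨MulAction.toPerm g, (hadj g _ _).symm⟩ (τ g) (hp g) (T₁ g)
      (hT₁ g) (T₀ g) (hT₀ g)
  exact ⟨fun g => LinearMap.mapsTo_ker_of_comp_eq (hcomm g),
    fun g => LinearMap.range_le_comap_range_of_comp_eq (hcomm g),
    fun g => LinearMap.trace_sub_trace_eq_trace_mapQ_range_sub_trace_restrict_ker (hcomm g) _ _⟩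

/-- The symmetric Maxwell rule: for a `G`-framework `(Γ, p, τ)` in the plane, with
`C₁ = ℝ^E` carrying the edge permutation action `T₁` and `C₀ = (V → ℝ²)` carrying the
action `T₀` given by `(g·F)_{g·v} = τ(g) F_v`, the kernel and cokernel of the equilibrium
map `∂` carry induced `G`-actions and, for every `g ∈ G`,
`trace(g on C₀) − trace(g on C₁) = trace(g on coker ∂) − trace(g on ker ∂)`. -/
theorem stmt12 {Vt G : Type} [Fintype Vt] [DecidableEq Vt] [Group G] [Fintype G]
    (Γ : SimpleGraph Vt) [DecidableRel Γ.Adj] (p : Vt → Fin 2 → ℝ)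
    [MulAction G Vt]
    (hadj : ∀ (g : G) (u v : Vt), Γ.Adj u v ↔ Γ.Adj (g • u) (g • v))
    (τ : G →* Matrix.orthogonalGroup (Fin 2) ℝ)
    (hp : ∀ (g : G) (v : Vt), p (g • v) = (τ g : Matrix (Fin 2) (Fin 2) ℝ).mulVec (p v))
    (T₁ : G → ((Γ.edgeSet → ℝ) →ₗ[ℝ] (Γ.edgeSet → ℝ)))
    (hT₁ : ∀ (g : G) (w : Γ.edgeSet → ℝ) (u v : Vt) (h : s(u, v) ∈ Γ.edgeSet)
      (h' : s(g • u, g • v) ∈ Γ.edgeSet),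
      T₁ g w ⟨s(g • u, g • v), h'⟩ = w ⟨s(u, v), h⟩)
    (T₀ : G → ((Vt → Fin 2 → ℝ) →ₗ[ℝ] (Vt → Fin 2 → ℝ)))
    (hT₀ : ∀ (g : G) (F : Vt → Fin 2 → ℝ) (v : Vt),
      T₀ g F (g • v) = (τ g : Matrix (Fin 2) (Fin 2) ℝ).mulVec (F v)) :
    ∃ (hker : ∀ g : G, ∀ x ∈ LinearMap.ker (equilibriumMap Γ p),
        T₁ g x ∈ LinearMap.ker (equilibriumMap Γ p))
      (hrange : ∀ g : G, LinearMap.range (equilibriumMap Γ p) ≤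
        (LinearMap.range (equilibriumMap Γ p)).comap (T₀ g)),
      ∀ g : G,
        LinearMap.trace ℝ (Vt → Fin 2 → ℝ) (T₀ g) -
            LinearMap.trace ℝ (Γ.edgeSet → ℝ) (T₁ g) =
          LinearMap.trace ℝ ((Vt → Fin 2 → ℝ) ⧸ LinearMap.range (equilibriumMap Γ p))
              (Submodule.mapQ (LinearMap.range (equilibriumMap Γ p))
                (LinearMap.range (equilibriumMap Γ p)) (T₀ g) (hrange g)) -
            LinearMap.trace ℝ (LinearMap.ker (equilibriumMap Γ p))
              ((T₁ g).restrict (hker g)) :=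
  stmt12_general Γ p hadj τ hp T₁ hT₁ T₀ hT₀
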